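/- Let G be a finite abelian group with smallest prime divisor p of |G|, let T be a nonempty sequence over G ∖ {0}, and let H = ⟨supp(T)⟩ be the subgroup generated by the elements occurring in T. If |T| ≤ 2p − 1 and |H| ≥ 2p, then |Σ₀(T)| ≥ |T| + 1. -/
import Mathlib


/-- The set of sums over nonempty subsequences (sub-multisets) of the sequence `S`. -/
def seqSums {G : Type*} [AddCommGroup G] (S : Multiset G) : Set G :=
  {x | ∃ T : Multiset G, T ≤ S ∧ T ≠ 0 ∧ T.sum = x}

/-- `seqSums S` together with `0`. -/
def seqSums0 {G : Type*} [AddCommGroup G] (S : Multiset G) : Set G :=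
  seqSums S ∪ {0}

open Classical in
/-- A sequence `S` over `G` is regular if for every proper subgroup `H ⊊ G`,
at most `|H| - 1` terms of `S` (counted with multiplicity) lie in `H`. -/
def IsRegularSeq {G : Type*} [AddCommGroup G] (S : Multiset G) : Prop :=
  ∀ H : AddSubgroup G, H ≠ ⊤ →
    Multiset.card (S.filter (fun g => g ∈ H)) ≤ Nat.card H - 1

/-- The Davenport constant: the smallest `t` such that every sequence over `G` of length
at least `t` contains a nonempty zero-sum subsequence. -/
noncomputable def davenport (G : Type*) [AddCommGroup G] : ℕ :=
  sInf {t : ℕ | ∀ S : Multiset G, t ≤ Multiset.card S →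
    ∃ T : Multiset G, T ≤ S ∧ T ≠ 0 ∧ T.sum = 0}

/-- The set of sums over nonempty subsets of the finite set `S`. -/
def setSums {G : Type*} [AddCommGroup G] (S : Finset G) : Set G :=
  {x | ∃ T : Finset G, T ⊆ S ∧ T.Nonempty ∧ (∑ g ∈ T, g) = x}

/-- `setSums S` together with `0`. -/
def setSums0 {G : Type*} [AddCommGroup G] (S : Finset G) : Set G :=
  setSums S ∪ {0}

section Aux
variable {G : Type*} [AddCommGroup G]

lemma zero_mem_seqSums0 (S : Multiset G) : (0 : G) ∈ seqSums0 S := Or.inr rfl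

lemma mem_seqSums0_of_mem {S : Multiset G} {t : G} (ht : t ∈ S) : t ∈ seqSums0 S :=
  Or.inl ⟨{t}, Multiset.singleton_le.mpr ht, by simp, by simp⟩

lemma seqSums0_zero : seqSums0 (0 : Multiset G) = {0} := by
  ext x
  simp only [seqSums0, seqSums, Set.mem_union, Set.mem_setOf_eq, Set.mem_singleton_iff]
  constructor
  · rintro (⟨U, hU, hne, rfl⟩ | rfl)
    · exact absurd (Multiset.le_zero.mp hU) hne
    · rfl
  · rintro rfl; exact Or.inr rfl

lemma seqSums0_cons (t : G) (S : Multiset G) :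
    seqSums0 (t ::ₘ S) = seqSums0 S ∪ (fun x => t + x) '' seqSums0 S := by
  classical
  ext x
  simp only [seqSums0, seqSums, Set.mem_union, Set.mem_setOf_eq, Set.mem_singleton_iff,
    Set.mem_image]
  constructor
  · rintro (⟨U, hU, hne, rfl⟩ | rfl)
    · by_cases htU : t ∈ U
      · have h1 : U.erase t ≤ S := by
          have := Multiset.erase_le_erase t hU
          rwa [Multiset.erase_cons_head] at this
        have hsum : U.sum = t + (U.erase t).sum := by
          conv_lhs => rw [← Multiset.cons_erase htU]
          simp
        by_cases h0 : U.erase t = 0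
        · right
          exact ⟨0, Or.inr rfl, by simp [hsum, h0]⟩
        · right
          exact ⟨(U.erase t).sum, Or.inl ⟨U.erase t, h1, h0, rfl⟩, hsum.symm⟩
      · left; left
        refine ⟨U, ?_, hne, rfl⟩
        rw [Multiset.le_iff_count]
        intro a
        have h := Multiset.le_iff_count.mp hU a
        rw [Multiset.count_cons] at h
        by_cases hat : a = t
        · subst hat; simpa [Multiset.count_eq_zero_of_notMem htU] using Nat.zero_le _
        · simpa [hat] using h
    · left; right; rfl
  · rintro (h | ⟨y, hy, rfl⟩)
    · rcases h with ⟨U, hU, hne, rfl⟩ | rfl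
      · exact Or.inl ⟨U, le_trans hU (Multiset.le_cons_self S t), hne, rfl⟩
      · exact Or.inr rfl
    · rcases hy with ⟨U, hU, hne, rfl⟩ | rfl
      · exact Or.inl ⟨t ::ₘ U, Multiset.cons_le_cons t hU, by simp, by simp⟩
      · exact Or.inl ⟨{t}, Multiset.singleton_le.mpr (Multiset.mem_cons_self t S), by simp, by simp⟩

/-- The stabilizer of a set under translation, as a subgroup. -/
def stabAdd (S : Set G) : AddSubgroup G where
  carrier := {g : G | (fun x => g + x) '' S = S}
  zero_mem' := by simp
  add_mem' := by
    intro a b ha hb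
    simp only [Set.mem_setOf_eq] at *
    have hcomp : (fun x => a + b + x) = (fun x : G => a + x) ∘ (fun x : G => b + x) := by
      funext x; simp [add_assoc]
    rw [hcomp, Set.image_comp, hb, ha]
  neg_mem' := by
    intro a ha
    simp only [Set.mem_setOf_eq] at *
    conv_lhs => rw [← ha]
    rw [Set.image_image]
    have hcomp : (fun x : G => -a + (a + x)) = id := by funext x; simp
    rw [hcomp, Set.image_id]

lemma main_lemma [Finite G] (T : Multiset G)
    (hT0 : ∀ g ∈ T, g ≠ (0 : G)) (hTne : T ≠ 0) :
    Multiset.card T + 1 ≤ (seqSums0 T).ncard ∨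
      ∃ g : G, g ≠ 0 ∧ (fun x => g + x) '' seqSums0 T = seqSums0 T := by
  induction T using Multiset.induction with
  | empty => exact absurd rfl hTne
  | cons t T ih =>
    have ht0 : t ≠ 0 := hT0 t (Multiset.mem_cons_self t T)
    by_cases hT : T = 0
    · subst hT
      left
      have h2 : seqSums0 (t ::ₘ 0) = {0, t} := by
        rw [seqSums0_cons, seqSums0_zero]
        ext x; simp only [Set.union_singleton, Set.mem_image, Set.mem_singleton_iff,
          Set.mem_insert_iff]; constructor
        · rintro (h | ⟨y, rfl, rfl⟩) <;> simp_all
        · rintro (rfl | rfl) <;> simp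
      rw [h2, Set.ncard_pair ht0.symm]
      simp
    · rcases ih (fun g hg => hT0 g (Multiset.mem_cons_of_mem hg)) hT with h | ⟨g, hg0, hg⟩
      · by_cases heq : seqSums0 (t ::ₘ T) = seqSums0 T
        · right
          refine ⟨t, ht0, ?_⟩
          have hsub : (fun x => t + x) '' seqSums0 T ⊆ seqSums0 T := by
            conv_rhs => rw [← heq]
            rw [seqSums0_cons]
            exact Set.subset_union_right
          have hcard : (seqSums0 T).ncard ≤ ((fun x => t + x) '' seqSums0 T).ncard := by
            rw [Set.ncard_image_of_injective _ (add_right_injective t)]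
          rw [heq]
          exact Set.eq_of_subset_of_ncard_le hsub hcard (Set.toFinite _)
        · left
          have hsub : seqSums0 T ⊆ seqSums0 (t ::ₘ T) := by
            rw [seqSums0_cons]; exact Set.subset_union_left
          have hlt : (seqSums0 T).ncard < (seqSums0 (t ::ₘ T)).ncard :=
            Set.ncard_lt_ncard (ssubset_of_subset_of_ne hsub (Ne.symm heq)) (Set.toFinite _)
          rw [Multiset.card_cons]
          omega
      · right
        refine ⟨g, hg0, ?_⟩
        rw [seqSums0_cons, Set.image_union, hg, Set.image_image]
        have : (fun x => g + (t + x)) = (fun x => t + (g + x)) := by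
          funext x; abel
        rw [this, ← Set.image_image, hg]

end Aux

/-- If `T` is a nonempty sequence over `G \ {0}` with `|T| ≤ 2p - 1` and
`|⟨supp T⟩| ≥ 2p`, where `p` is the smallest prime divisor of `|G|`, then
`|Σ₀(T)| ≥ |T| + 1`. -/
theorem sums_lower_bound_long (G : Type*) [AddCommGroup G] [Finite G]
    (h1 : 1 < Nat.card G) (p : ℕ) (hp : p = (Nat.card G).minFac)
    (T : Multiset G) (hT0 : ∀ g ∈ T, g ≠ (0 : G)) (hTne : T ≠ 0)
    (hlen : Multiset.card T ≤ 2 * p - 1)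
    (hH : 2 * p ≤ Nat.card (AddSubgroup.closure {g : G | g ∈ T})) :
    Multiset.card T + 1 ≤ Nat.card (seqSums0 T) := by
  have hfin : (seqSums0 T).Finite := Set.toFinite _
  have hp1 : 1 ≤ p := by
    rw [hp]; exact Nat.minFac_pos _
  have hTcard : Multiset.card T + 1 ≤ 2 * p := by omega
  rw [Nat.card_coe_set_eq]
  rcases main_lemma T hT0 hTne with h | ⟨g, hg0, hg⟩
  · exact h
  · set K := AddSubgroup.closure ({g} : Set G) with hK
    have hKstab : ∀ k ∈ K, (fun x => k + x) '' seqSums0 T = seqSums0 T := by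
      intro k hk
      have hle : K ≤ stabAdd (seqSums0 T) := by
        rw [hK, AddSubgroup.closure_le]
        intro x hx
        rcases hx with rfl
        exact hg
      exact hle hk
    have hKsub : (K : Set G) ⊆ seqSums0 T := by
      intro k hk
      have h1 : k ∈ (fun x => k + x) '' seqSums0 T := ⟨0, zero_mem_seqSums0 T, by simp⟩
      rwa [hKstab k hk] at h1
    have hgK : g ∈ K := AddSubgroup.subset_closure rfl
    have hK2 : 2 ≤ Nat.card K := by
      have hne : K ≠ ⊥ := by
        intro hbot
        rw [hbot] at hgK
        exact hg0 (AddSubgroup.mem_bot.mp hgK)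
      have h1' : Nat.card K ≠ 1 := by
        intro hone
        exact hne (AddSubgroup.eq_bot_of_card_eq K hone)
      have hpos : 0 < Nat.card K := Nat.card_pos
      omega
    have hKp : p ≤ Nat.card K := by
      rw [hp]
      exact Nat.minFac_le_of_dvd hK2 (AddSubgroup.card_addSubgroup_dvd_card K)
    have hKset : (K : Set G).ncard = Nat.card K := (Nat.card_coe_set_eq _).symm
    by_cases hall : ∀ t ∈ T, t ∈ K
    · have hHK : AddSubgroup.closure {g : G | g ∈ T} ≤ K :=
        (AddSubgroup.closure_le K).mpr (fun x hx => hall x hx)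
      have hcard : Nat.card (AddSubgroup.closure {g : G | g ∈ T}) ≤ Nat.card K :=
        AddSubgroup.card_le_of_le hHK
      calc Multiset.card T + 1 ≤ 2 * p := hTcard
        _ ≤ Nat.card (AddSubgroup.closure {g : G | g ∈ T}) := hH
        _ ≤ Nat.card K := hcard
        _ = (K : Set G).ncard := hKset.symm
        _ ≤ (seqSums0 T).ncard := Set.ncard_le_ncard hKsub hfin
    · push_neg at hall
      obtain ⟨t, htT, htK⟩ := hall
      have htS : t ∈ seqSums0 T := mem_seqSums0_of_mem htT
      have hcosub : (fun x => x + t) '' (K : Set G) ⊆ seqSums0 T := by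
        rintro _ ⟨k, hk, rfl⟩
        have h1 : k + t ∈ (fun x => k + x) '' seqSums0 T := ⟨t, htS, rfl⟩
        rwa [hKstab k hk] at h1
      have hdisj : Disjoint ((K : Set G)) ((fun x => x + t) '' (K : Set G)) := by
        rw [Set.disjoint_left]
        rintro x hx ⟨k, hk, rfl⟩
        apply htK
        have heq2 : t = -k + (k + t) := (neg_add_cancel_left k t).symm
        rw [heq2]
        exact K.add_mem (K.neg_mem hk) hx
      have hunion : (K : Set G) ∪ (fun x => x + t) '' (K : Set G) ⊆ seqSums0 T :=
        Set.union_subset hKsub hcosub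
      have himg : ((fun x => x + t) '' (K : Set G)).ncard = (K : Set G).ncard :=
        Set.ncard_image_of_injective _ (add_left_injective t)
      have hun : ((K : Set G) ∪ (fun x => x + t) '' (K : Set G)).ncard = 2 * (K : Set G).ncard := by
        rw [Set.ncard_union_eq hdisj (Set.toFinite _) (Set.toFinite _), himg]
        ring
      calc Multiset.card T + 1 ≤ 2 * p := hTcard
        _ ≤ 2 * (K : Set G).ncard := by rw [hKset]; omega
        _ = ((K : Set G) ∪ (fun x => x + t) '' (K : Set G)).ncard := hun.symm
        _ ≤ (seqSums0 T).ncard := Set.ncard_le_ncard hunion hfin
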